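/- For all f, g, h ∈ ℝⁿ, the vector vᵢ = (1/(2n)) ∑_{j=1}^n (gᵢ − gⱼ)(fᵢhⱼ + fⱼhᵢ) satisfies ‖v‖₂ ≤ ‖f‖_∞ ‖h‖_∞ ‖g − E g‖₂, where E g is the constant vector with entries the mean of g and ‖·‖₂ is the Euclidean norm. -/

import Mathlib

open Finset

/-- The symmetric matrix `Θ_x`: off-diagonal entries `(xᵢ+xⱼ)/(2n)`, diagonal chosen
so that every row sums to zero. -/
noncomputable def Theta (n : ℕ) (x : Fin n → ℝ) : Matrix (Fin n) (Fin n) ℝ :=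
  fun i j =>
    if i = j then -(∑ k ∈ Finset.univ.erase i, (x i + x k) / (2 * n))
    else (x i + x j) / (2 * n)

/-- `I_x = Iₙ + Θ_x`. -/
noncomputable def Imat (n : ℕ) (x : Fin n → ℝ) : Matrix (Fin n) (Fin n) ℝ :=
  1 + Theta n x

/-- `E f`: the constant vector whose entries all equal the mean of `f`. -/
noncomputable def meanVec (n : ℕ) (f : Fin n → ℝ) : Fin n → ℝ :=
  fun _ => (∑ i, f i) / n

/-- The sup norm `‖x‖_∞`. -/
noncomputable def linf (n : ℕ) (x : Fin n → ℝ) : ℝ :=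
  sSup (Set.range fun i => |x i|)

/-- The Ky Fan `k`-norm: the sum of the `k` largest absolute values of the entries,
i.e. the maximum of `∑_{i ∈ S} |xᵢ|` over subsets `S` of cardinality `k`. -/
noncomputable def kyFan (n k : ℕ) (x : Fin n → ℝ) : ℝ :=
  sSup ((fun S : Finset (Fin n) => ∑ i ∈ S, |x i|) '' {S | S.card = k})

/-- The dual Ky Fan `k`-norm: `max(‖x‖_∞, ‖x‖₁ / k)`. -/
noncomputable def kyFanDual (n k : ℕ) (x : Fin n → ℝ) : ℝ :=
  max (linf n x) ((∑ i, |x i|) / k)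

/-- A symmetric norm on `ℝⁿ`: a norm invariant under coordinate permutations
and sign changes. -/
structure IsSymmNorm (n : ℕ) (N : (Fin n → ℝ) → ℝ) : Prop where
  add_le : ∀ x y, N (x + y) ≤ N x + N y
  smul : ∀ (c : ℝ) (x), N (c • x) = |c| * N x
  pos : ∀ x, x ≠ 0 → 0 < N x
  perm : ∀ (σ : Equiv.Perm (Fin n)) (x), N (x ∘ σ) = N x
  sign : ∀ (ε x : Fin n → ℝ), (∀ i, ε i = 1 ∨ ε i = -1) → N (ε * x) = N x

/-! Write `vᵢ = (1/2n) ∑ⱼ aᵢⱼ` with `aᵢⱼ = (gᵢ - gⱼ)(fᵢhⱼ + fⱼhᵢ)`. The kernel `a` is antisymmetric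
and `|aᵢⱼ| ≤ 2‖f‖_∞‖h‖_∞|gᵢ - gⱼ|`. Antisymmetry turns `∑ᵢ vᵢ²` into `(1/4n) ∑ᵢⱼ aᵢⱼ(vᵢ - vⱼ)`;
Cauchy–Schwarz over pairs and `∑ᵢⱼ (xᵢ - xⱼ)² = 2n‖x - E x‖₂² ≤ 2n‖x‖₂²` then give
`‖v‖₂² ≤ ‖f‖_∞‖h‖_∞‖g - E g‖₂‖v‖₂`. Bounding each `|vᵢ|` directly would lose a factor `√2`. -/

section PairSums

variable {ι : Type*} [Fintype ι]

theorem sum_sum_mul_sub_of_antisymm {R : Type*} [CommRing R] {a : ι → ι → R}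
    (ha : ∀ i j, a j i = -a i j) (v : ι → R) :
    ∑ i, ∑ j, a i j * (v i - v j) = 2 * ∑ i, (∑ j, a i j) * v i := by
  have hswap : ∑ i, ∑ j, a i j * v j = -∑ i, (∑ j, a i j) * v i := by
    rw [sum_comm, ← sum_neg_distrib]
    refine sum_congr rfl fun i _ => ?_
    rw [sum_mul, ← sum_neg_distrib]
    exact sum_congr rfl fun j _ => by rw [ha]; ring
  simp only [mul_sub, sum_sub_distrib, hswap, sum_mul]
  ring

theorem sum_sum_sub_sq {R : Type*} [CommRing R] (x : ι → R) :
    ∑ i, ∑ j, (x i - x j) ^ 2 = 2 * Fintype.card ι * ∑ i, x i ^ 2 - 2 * (∑ i, x i) ^ 2 := by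
  simp only [sub_sq, sum_add_distrib, sum_sub_distrib, sum_const,
    card_univ, nsmul_eq_mul, ← mul_sum, ← sum_mul, mul_assoc]
  ring

theorem sum_sum_sub_sq_eq_mul_sum_sub_mean_sq (x : ι → ℝ) :
    ∑ i, ∑ j, (x i - x j) ^ 2
      = 2 * Fintype.card ι * ∑ i, (x i - (∑ j, x j) / Fintype.card ι) ^ 2 := by
  rcases isEmpty_or_nonempty ι with _ | _
  · simp
  have hn : (Fintype.card ι : ℝ) ≠ 0 := by positivity
  simp only [sub_sq, sum_add_distrib, sum_sub_distrib, sum_const,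
    card_univ, nsmul_eq_mul, ← mul_sum, ← sum_mul, mul_assoc]
  field_simp
  ring

theorem sum_sum_mul_le_sqrt_mul_sqrt (u w : ι → ι → ℝ) :
    ∑ i, ∑ j, u i j * w i j ≤ √(∑ i, ∑ j, u i j ^ 2) * √(∑ i, ∑ j, w i j ^ 2) := by
  simpa only [Fintype.sum_prod_type] using
    Real.sum_mul_le_sqrt_mul_sqrt univ (fun p : ι × ι => u p.1 p.2) (fun p => w p.1 p.2)

theorem sqrt_sum_sum_sub_sq_le (x : ι → ℝ) :
    √(∑ i, ∑ j, (x i - x j) ^ 2) ≤ √(2 * Fintype.card ι) * √(∑ i, x i ^ 2) := by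
  rw [← Real.sqrt_mul (by positivity), sum_sum_sub_sq]
  exact Real.sqrt_le_sqrt (by nlinarith [sq_nonneg (∑ i, x i)])

theorem sqrt_sum_sum_sub_sq_eq (x : ι → ℝ) :
    √(∑ i, ∑ j, (x i - x j) ^ 2)
      = √(2 * Fintype.card ι) * √(∑ i, (x i - (∑ j, x j) / Fintype.card ι) ^ 2) := by
  rw [← Real.sqrt_mul (by positivity), sum_sum_sub_sq_eq_mul_sum_sub_mean_sq]

theorem sqrt_sum_sq_sum_le_of_antisymm {a : ι → ι → ℝ} {g : ι → ℝ} {C : ℝ} (hC : 0 ≤ C)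
    (ha : ∀ i j, a j i = -a i j) (hag : ∀ i j, |a i j| ≤ C * |g i - g j|) :
    √(∑ i, (∑ j, a i j) ^ 2)
      ≤ C * Fintype.card ι * √(∑ i, (g i - (∑ j, g j) / Fintype.card ι) ^ 2) := by
  set v : ι → ℝ := fun i => ∑ j, a i j
  set n : ℝ := (Fintype.card ι : ℝ)
  set S := √(∑ i, v i ^ 2)
  set G := √(∑ i, (g i - (∑ j, g j) / n) ^ 2)
  have hS : S ^ 2 = ∑ i, v i ^ 2 := Real.sq_sqrt (by positivity)
  have h2n : √(2 * n) * √(2 * n) = 2 * n := Real.mul_self_sqrt (by positivity)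
  have hsymm : 2 * S ^ 2 = ∑ i, ∑ j, a i j * (v i - v j) := by
    rw [sum_sum_mul_sub_of_antisymm ha, hS]
    simp only [v, sq]
  have hdom : ∑ i, ∑ j, a i j * (v i - v j) ≤ C * ∑ i, ∑ j, |g i - g j| * |v i - v j| := by
    simp only [mul_sum]
    refine sum_le_sum fun i _ => sum_le_sum fun j _ => ?_
    calc a i j * (v i - v j) ≤ |a i j| * |v i - v j| := by rw [← abs_mul]; exact le_abs_self _
      _ ≤ C * |g i - g j| * |v i - v j| := by gcongr; exact hag i j
      _ = C * (|g i - g j| * |v i - v j|) := mul_assoc _ _ _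
  have hCS := sum_sum_mul_le_sqrt_mul_sqrt (fun i j => |g i - g j|) (fun i j => |v i - v j|)
  simp only [sq_abs, sqrt_sum_sum_sub_sq_eq g] at hCS
  have hS_le : 2 * S ^ 2 ≤ 2 * (C * n * G * S) := calc
    2 * S ^ 2 ≤ C * (√(2 * n) * G * √(∑ i, ∑ j, (v i - v j) ^ 2)) := by
      rw [hsymm]; exact hdom.trans (by gcongr)
    _ ≤ C * (√(2 * n) * G * (√(2 * n) * S)) := by gcongr; exact sqrt_sum_sum_sub_sq_le v
    _ = 2 * (C * n * G * S) := by linear_combination C * G * S * h2n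
  have hS0 : 0 ≤ S := Real.sqrt_nonneg _
  have hG0 : 0 ≤ G := Real.sqrt_nonneg _
  nlinarith [mul_nonneg (mul_nonneg hC (Nat.cast_nonneg (Fintype.card ι))) hG0]

end PairSums

theorem abs_le_linf {n : ℕ} (x : Fin n → ℝ) (i : Fin n) : |x i| ≤ linf n x :=
  le_csSup (Set.finite_range _).bddAbove ⟨i, rfl⟩

theorem linf_nonneg (n : ℕ) (x : Fin n → ℝ) : 0 ≤ linf n x :=
  Real.sSup_nonneg (by rintro _ ⟨i, rfl⟩; exact abs_nonneg _)

theorem abs_mul_add_mul_le_linf {n : ℕ} (f h : Fin n → ℝ) (i j : Fin n) :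
    |f i * h j + f j * h i| ≤ 2 * linf n f * linf n h := calc
  |f i * h j + f j * h i| ≤ |f i| * |h j| + |f j| * |h i| := by
    rw [← abs_mul, ← abs_mul]; exact abs_add_le _ _
  _ ≤ linf n f * linf n h + linf n f * linf n h := by
    gcongr <;> first | exact abs_le_linf _ _ | exact linf_nonneg _ _
  _ = 2 * linf n f * linf n h := by ring

theorem sqrt_sum_const_mul_sq {ι : Type*} [Fintype ι] (c : ℝ) (x : ι → ℝ) :
    √(∑ i, (c * x i) ^ 2) = |c| * √(∑ i, x i ^ 2) := by
  simp_rw [mul_pow, ← mul_sum, Real.sqrt_mul (sq_nonneg c), Real.sqrt_sq_eq_abs]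

theorem stmt_18_general (n : ℕ) (f g h : Fin n → ℝ) :
    Real.sqrt (∑ i, ((1 / (2 * n)) * ∑ j, (g i - g j) * (f i * h j + f j * h i)) ^ 2)
      ≤ linf n f * linf n h * Real.sqrt (∑ i, (g i - (∑ j, g j) / n) ^ 2) := by
  have hF := linf_nonneg n f
  have hH := linf_nonneg n h
  have hrows := sqrt_sum_sq_sum_le_of_antisymm (C := 2 * linf n f * linf n h) (by positivity)
    (a := fun i j => (g i - g j) * (f i * h j + f j * h i)) (fun i j => by ring)
    (fun i j => by rw [abs_mul, mul_comm]; gcongr; exact abs_mul_add_mul_le_linf f h i j)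
  rw [Fintype.card_fin] at hrows
  set G := √(∑ i, (g i - (∑ j, g j) / n) ^ 2)
  calc _ = 1 / (2 * n) * √(∑ i, (∑ j, (g i - g j) * (f i * h j + f j * h i)) ^ 2) := by
        rw [sqrt_sum_const_mul_sq, abs_of_nonneg (by positivity)]
    _ ≤ 1 / (2 * n) * (2 * linf n f * linf n h * n * G) := by gcongr
    _ = linf n f * linf n h * G * (n / n) := by ring
    _ ≤ linf n f * linf n h * G := mul_le_of_le_one_right (by positivity) (div_self_le_one _)

/-- Proposition 3.6 (explicit form): the ℓ²-bimodule inequality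
`‖∂*(f (∂g) h)‖₂ ≤ ‖f‖_∞ ‖h‖_∞ ‖g − E g‖₂`. -/
theorem stmt_18 (n : ℕ) (hn : 0 < n) (f g h : Fin n → ℝ) :
    Real.sqrt (∑ i, ((1 / (2 * n)) * ∑ j, (g i - g j) * (f i * h j + f j * h i)) ^ 2)
      ≤ linf n f * linf n h * Real.sqrt (∑ i, (g i - (∑ j, g j) / n) ^ 2) :=
  stmt_18_general n f g h
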